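/- Fix ν ≥ 1, real numbers q₁ < q₂ < … < q_ν, and M > 0, and let q denote the diagonal matrix diag(q₁,…,q_ν). Then there exist constants C > 0 and t₀ > 0 such that for every Hermitian ν×ν complex matrix A with |A_{jk}| ≤ M for all j,k, every real t ≥ t₀ and every n ∈ {1,…,ν}, the n-th eigenvalue of the Hermitian matrix t·q + A satisfies |λ_n(t·q + A) − ( t·q_n + A_{nn} − (1/t) ∑_{j≠n} |A_{jn}|² / (q_j − q_n) )| ≤ C / t². -/

import Mathlib

open Matrix

/-- The eigenvalues of a Hermitian matrix, listed in increasing order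
(counted with multiplicity). -/
noncomputable def eigs {ν : ℕ} {A : Matrix (Fin ν) (Fin ν) ℂ} (hA : A.IsHermitian) :
    Fin ν → ℝ :=
  hA.eigenvalues ∘ ⇑(Tuple.sort hA.eigenvalues)

lemma LCA_gap {ν : ℕ} (q : Fin ν → ℝ) (hq : StrictMono q) :
    ∃ g : ℝ, 0 < g ∧ ∀ j k : Fin ν, j ≠ k → g ≤ |q j - q k| := by
  by_cases hne : (Finset.univ.offDiag : Finset (Fin ν × Fin ν)).Nonempty
  · obtain ⟨p, hp, hmin⟩ := Finset.exists_min_image _ (fun p => |q p.1 - q p.2|) hne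
    rw [Finset.mem_offDiag] at hp
    refine ⟨|q p.1 - q p.2|, abs_pos.mpr (sub_ne_zero.mpr (fun e => hp.2.2 (hq.injective e))), ?_⟩
    intro j k hjk
    exact hmin (j, k) (Finset.mem_offDiag.mpr ⟨Finset.mem_univ _, Finset.mem_univ _, hjk⟩)
  · refine ⟨1, one_pos, fun j k hjk => absurd ?_ hne⟩
    exact ⟨(j, k), Finset.mem_offDiag.mpr ⟨Finset.mem_univ _, Finset.mem_univ _, hjk⟩⟩

lemma LCA_id {ν : ℕ} (f : Fin ν → Fin ν) (hf : StrictMono f) : ∀ i, f i = i := by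
  have hbij : Function.Bijective f := (Finite.injective_iff_bijective).mp hf.injective
  set e := Equiv.ofBijective f hbij with he
  have hsymm : StrictMono ⇑e.symm := by
    intro a b hab
    rcases lt_trichotomy (e.symm a) (e.symm b) with h|h|h
    · exact h
    · exact absurd (congrArg e h) (by simpa using hab.ne)
    · have h4 := hf h
      have h1 : f (e.symm a) = a := e.apply_symm_apply a
      have h2 : f (e.symm b) = b := e.apply_symm_apply b
      rw [h2, h1] at h4
      exact absurd hab (not_lt.mpr h4.le)
  intro i
  have h1 : i ≤ f i := @StrictMono.le_apply (Fin ν) _ (inferInstance : WellFoundedLT (Fin ν)) f hf i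
  have h2 : f i ≤ i := by
    have h3 := @StrictMono.le_apply (Fin ν) _ (inferInstance : WellFoundedLT (Fin ν)) _ hsymm (f i)
    have h5 : e.symm (f i) = i := e.symm_apply_apply i
    rwa [h5] at h3
  exact le_antisymm h2 h1

lemma LCA_row {ν : ℕ} (q : Fin ν → ℝ) (t : ℝ) (A : Matrix (Fin ν) (Fin ν) ℂ)
    (h : (t • Matrix.diagonal (fun j => (q j : ℂ)) + A).IsHermitian) (i j : Fin ν) :
    (((h.eigenvalues i - t * q j : ℝ)) : ℂ) * (h.eigenvectorBasis i) j
      = ∑ k, A j k * (h.eigenvectorBasis i) k := by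
  have h0 := congrFun (h.mulVec_eigenvectorBasis i) j
  simp only [mulVec, dotProduct, Matrix.add_apply, Matrix.smul_apply, Matrix.diagonal_apply,
    Pi.smul_apply, Complex.real_smul, smul_eq_mul, add_mul, Finset.sum_add_distrib,
    mul_ite, ite_mul, mul_zero, zero_mul,
    Finset.sum_ite_eq, Finset.mem_univ, if_true] at h0
  push_cast
  linear_combination -h0

lemma LCA_norm {ν : ℕ} {B : Matrix (Fin ν) (Fin ν) ℂ} (h : B.IsHermitian) (i : Fin ν) :
    ∑ j, ‖(h.eigenvectorBasis i) j‖ ^ 2 = 1 := by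
  have h1 : ‖h.eigenvectorBasis i‖ = 1 := h.eigenvectorBasis.orthonormal.1 i
  rw [EuclideanSpace.norm_eq, Real.sqrt_eq_one] at h1
  simpa using h1

lemma LCA_orth {ν : ℕ} {B : Matrix (Fin ν) (Fin ν) ℂ} (h : B.IsHermitian) {i i' : Fin ν}
    (hne : i ≠ i') :
    ∑ j, (starRingEnd ℂ) ((h.eigenvectorBasis i) j) * (h.eigenvectorBasis i') j = 0 := by
  have := h.eigenvectorBasis.orthonormal.2 hne
  simp [PiLp.inner_apply] at this
  rw [← this]
  exact Finset.sum_congr rfl (fun _ _ => mul_comm _ _)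

lemma LCA_absle1 {ν : ℕ} {B : Matrix (Fin ν) (Fin ν) ℂ} (h : B.IsHermitian) (i j : Fin ν) :
    ‖(h.eigenvectorBasis i) j‖ ≤ 1 := by
  have h1 : ‖(h.eigenvectorBasis i) j‖ ^ 2 ≤ 1 := by
    rw [← LCA_norm h i]
    exact Finset.single_le_sum (f := fun k => ‖(h.eigenvectorBasis i) k‖ ^ 2)
      (fun k _ => sq_nonneg _) (Finset.mem_univ j)
  nlinarith [norm_nonneg ((h.eigenvectorBasis i) j)]

lemma LCA_rowabs {ν : ℕ} (q : Fin ν → ℝ) (M t : ℝ) (hM : 0 < M)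
    (A : Matrix (Fin ν) (Fin ν) ℂ) (hb : ∀ j k, ‖A j k‖ ≤ M)
    (h : (t • Matrix.diagonal (fun j => (q j : ℂ)) + A).IsHermitian) (i j : Fin ν) :
    |h.eigenvalues i - t * q j| * ‖(h.eigenvectorBasis i) j‖ ≤ M * ν := by
  have h1 : ‖(((h.eigenvalues i - t * q j : ℝ)) : ℂ) * (h.eigenvectorBasis i) j‖
      ≤ M * ν := by
    rw [LCA_row q t A h i j]
    calc ‖∑ k, A j k * (h.eigenvectorBasis i) k‖
        ≤ ∑ k, ‖A j k * (h.eigenvectorBasis i) k‖ :=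
          norm_sum_le _ _
      _ ≤ ∑ _k : Fin ν, M * 1 := by
          refine Finset.sum_le_sum (fun k _ => ?_)
          rw [norm_mul]
          exact mul_le_mul (hb j k) (LCA_absle1 h i k) (norm_nonneg _) hM.le
      _ = M * ν := by simp [mul_comm]
  rwa [norm_mul, Complex.norm_real, Real.norm_eq_abs] at h1

lemma LCA_loc {ν : ℕ} (hν : 1 ≤ ν) (q : Fin ν → ℝ) (M t : ℝ) (hM : 0 < M)
    (A : Matrix (Fin ν) (Fin ν) ℂ) (hb : ∀ j k, ‖A j k‖ ≤ M)
    (h : (t • Matrix.diagonal (fun j => (q j : ℂ)) + A).IsHermitian) (i : Fin ν) :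
    ∃ j₀ : Fin ν, |h.eigenvalues i - t * q j₀| ≤ M * (ν : ℝ) ^ 2 := by
  have hν' : (1 : ℝ) ≤ (ν : ℝ) := by exact_mod_cast hν
  have hνpos : (0 : ℝ) < (ν : ℝ) := by linarith
  have : ∃ j₀ : Fin ν, 1 / (ν : ℝ) ≤ ‖(h.eigenvectorBasis i) j₀‖ ^ 2 := by
    by_contra hc
    push_neg at hc
    have hne : (Finset.univ : Finset (Fin ν)).Nonempty := ⟨⟨0, hν⟩, Finset.mem_univ _⟩
    have h2 : ∑ j, ‖(h.eigenvectorBasis i) j‖ ^ 2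
        < ∑ _j : Fin ν, 1 / (ν : ℝ) := Finset.sum_lt_sum_of_nonempty hne (fun j _ => hc j)
    rw [LCA_norm h i] at h2
    rw [Finset.sum_const, Finset.card_univ, Fintype.card_fin, nsmul_eq_mul] at h2
    rw [mul_one_div, div_self (ne_of_gt hνpos)] at h2
    exact lt_irrefl _ h2
  obtain ⟨j₀, hj₀⟩ := this
  refine ⟨j₀, ?_⟩
  have h1 := LCA_rowabs q M t hM A hb h i j₀
  have h2 := LCA_absle1 h i j₀
  have h3 := norm_nonneg ((h.eigenvectorBasis i) j₀)
  have h4 := abs_nonneg (h.eigenvalues i - t * q j₀)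
  -- a ≥ a^2 ≥ 1/ν  ⇒  a*ν ≥ 1 ⇒ X ≤ X*(a*ν) = (X*a)*ν ≤ Mν*ν
  have h5 : 1 ≤ ‖(h.eigenvectorBasis i) j₀‖ * (ν:ℝ) := by
    have : 1/(ν:ℝ) ≤ ‖(h.eigenvectorBasis i) j₀‖ := by nlinarith
    calc (1:ℝ) = (1/(ν:ℝ)) * ν := by field_simp
    _ ≤ _ := by nlinarith
  calc |h.eigenvalues i - t * q j₀|
      ≤ |h.eigenvalues i - t * q j₀| * (‖(h.eigenvectorBasis i) j₀‖ * ν) := by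
        nlinarith
    _ = (|h.eigenvalues i - t * q j₀| * ‖(h.eigenvectorBasis i) j₀‖) * ν := by ring
    _ ≤ (M * ν) * ν := by nlinarith
    _ = M * (ν:ℝ)^2 := by ring

set_option maxHeartbeats 1600000 in
lemma LCA_window {ν : ℕ} (hν : 1 ≤ ν) (q : Fin ν → ℝ) (hq : StrictMono q)
    (M g t : ℝ) (hM : 0 < M) (hg : 0 < g)
    (hgap : ∀ j k : Fin ν, j ≠ k → g ≤ |q j - q k|)
    (A : Matrix (Fin ν) (Fin ν) ℂ) (hA : A.IsHermitian)
    (hb : ∀ j k, ‖A j k‖ ≤ M)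
    (ht1 : 1 ≤ t) (htg : 2*(M*(ν:ℝ)^2) + 2 ≤ t*g) (htc : 2*(ν:ℝ)*(2*M*(ν:ℝ)/g) ≤ t)
    (h : (t • Matrix.diagonal (fun j => (q j : ℂ)) + A).IsHermitian)
    (i j₀ : Fin ν) (hloc : |h.eigenvalues i - t * q j₀| ≤ M*(ν:ℝ)^2) :
    (∀ j, j ≠ j₀ → ‖(h.eigenvectorBasis i) j‖ ≤ (2*M*(ν:ℝ)/g)/t)
    ∧ 3/4 ≤ ‖(h.eigenvectorBasis i) j₀‖^2
    ∧ |h.eigenvalues i - (t * q j₀ + (A j₀ j₀).re - (1/t) * ∑ j ∈ Finset.univ.erase j₀,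
          ‖A j j₀‖^2 / (q j - q j₀))|
        ≤ (2*(ν:ℝ)*(2*M^2*(ν:ℝ)*(2*M*(ν:ℝ)/g)/g + 2*M^2*(M*(ν:ℝ)^2)/g^2))/t^2 := by
  have hν' : (1:ℝ) ≤ (ν:ℝ) := by exact_mod_cast hν
  have ht0 : (0:ℝ) < t := lt_of_lt_of_le one_pos ht1
  set lam := h.eigenvalues i with hlam
  set v : Fin ν → ℂ := fun j => (h.eigenvectorBasis i) j with hv
  set a : Fin ν → ℝ := fun j => ‖v j‖ with ha
  have ha0 : ∀ j, 0 ≤ a j := fun j => norm_nonneg _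
  have ha1 : ∀ j, a j ≤ 1 := fun j => LCA_absle1 h i j
  have hnorm : ∑ j, a j ^ 2 = 1 := LCA_norm h i
  have hrow : ∀ j, ((lam - t * q j : ℝ) : ℂ) * v j = ∑ k, A j k * v k :=
    fun j => LCA_row q t A h i j
  have hrowabs : ∀ j, |lam - t * q j| * a j ≤ M * ν := fun j => LCA_rowabs q M t hM A hb h i j
  -- separation
  have hsep : ∀ j, j ≠ j₀ → t*g/2 + 1 ≤ |lam - t * q j| := by
    intro j hj
    have h2 : g ≤ |q j - q j₀| := hgap j j₀ hj
    have h3 : t * g ≤ |t * q j - t * q j₀| := by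
      rw [← mul_sub, abs_mul, abs_of_pos ht0]
      exact mul_le_mul_of_nonneg_left h2 ht0.le
    have h4 : |t*q j - t*q j₀| ≤ |t*q j - lam| + |lam - t*q j₀| := abs_sub_le _ _ _
    rw [abs_sub_comm (t*q j) lam] at h4
    linarith
  -- off-diagonal components small
  have hoff : ∀ j, j ≠ j₀ → a j ≤ (2*M*(ν:ℝ)/g)/t := by
    intro j hj
    have h1 := hrowabs j
    have h2 := hsep j hj
    have h3 : t*g/2 * a j ≤ M * ν := by nlinarith [ha0 j]
    rw [div_div, le_div_iff₀ (by positivity : (0:ℝ) < g*t)]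
    nlinarith
  -- concentration
  have hcard : (((Finset.univ : Finset (Fin ν)).erase j₀).card : ℝ) ≤ (ν:ℝ) := by
    have h1 : ((Finset.univ : Finset (Fin ν)).erase j₀).card ≤ ν := by
      calc _ ≤ (Finset.univ : Finset (Fin ν)).card := Finset.card_erase_le
      _ = ν := by simp
    exact_mod_cast h1
  have hsumoff : ∑ j ∈ Finset.univ.erase j₀, a j ^2 ≤ 1/4 := by
    have hone : ∀ j ∈ Finset.univ.erase j₀, a j ^2 ≤ ((2*M*(ν:ℝ)/g)/t)^2 := by
      intro j hj
      have := hoff j (Finset.ne_of_mem_erase hj)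
      nlinarith [ha0 j]
    calc ∑ j ∈ Finset.univ.erase j₀, a j ^2
        ≤ ((Finset.univ.erase j₀).card : ℝ) * ((2*M*(ν:ℝ)/g)/t)^2 := by
          have := Finset.sum_le_card_nsmul _ _ _ hone
          rwa [nsmul_eq_mul] at this
      _ ≤ (ν:ℝ) * ((2*M*(ν:ℝ)/g)/t)^2 := by
          have : (0:ℝ) ≤ ((2*M*(ν:ℝ)/g)/t)^2 := sq_nonneg _
          nlinarith
      _ ≤ 1/4 := by
          rw [div_pow, ← mul_div_assoc, div_le_iff₀ (by positivity : (0:ℝ) < t^2)]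
          have hc : (0:ℝ) ≤ 2*M*(ν:ℝ)/g := by positivity
          nlinarith [mul_self_le_mul_self (by positivity : (0:ℝ) ≤ 2*(ν:ℝ)*(2*M*(ν:ℝ)/g)) htc,
            mul_nonneg (mul_nonneg (sub_nonneg.mpr hν') (by positivity : (0:ℝ) ≤ (ν:ℝ)))
              (sq_nonneg (2*M*(ν:ℝ)/g))]
  have hj₀2 : 3/4 ≤ a j₀ ^2 := by
    have h1 : a j₀^2 + ∑ j ∈ Finset.univ.erase j₀, a j^2 = 1 := by
      rw [← hnorm]
      exact Finset.add_sum_erase _ (fun j => a j ^ 2) (Finset.mem_univ j₀)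
    linarith
  refine ⟨hoff, hj₀2, ?_⟩
  have hj₀a : 1/2 ≤ a j₀ := by nlinarith [ha0 j₀]
  set c1 : ℝ := 2*M*(ν:ℝ)/g with hc1
  have hc1pos : 0 < c1 := by positivity
  have hdne : ∀ j, j ≠ j₀ → ((lam - t*q j : ℝ) : ℂ) ≠ 0 := by
    intro j hj h0
    have h1 := hsep j hj
    rw [Complex.ofReal_eq_zero] at h0
    rw [h0, abs_zero] at h1
    nlinarith
  have hqne : ∀ j, j ≠ j₀ → q j - q j₀ ≠ 0 := by
    intro j hj
    exact sub_ne_zero.mpr (fun e => hj (hq.injective e))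
  have hnum : ∀ j : Fin ν, ‖∑ k ∈ Finset.univ.erase j₀, A j k * v k‖
      ≤ M*(ν:ℝ)*(c1/t) := by
    intro j
    calc ‖∑ k ∈ Finset.univ.erase j₀, A j k * v k‖
        ≤ ∑ k ∈ Finset.univ.erase j₀, ‖A j k * v k‖ := norm_sum_le _ _
      _ ≤ ∑ _k ∈ Finset.univ.erase j₀, M * (c1/t) := by
          refine Finset.sum_le_sum (fun k hk => ?_)
          rw [norm_mul]
          exact mul_le_mul (hb j k) (hoff k (Finset.ne_of_mem_erase hk)) (ha0 k) hM.le
      _ = ((Finset.univ.erase j₀).card : ℝ) * (M * (c1/t)) := by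
          rw [Finset.sum_const, nsmul_eq_mul]
      _ ≤ (ν:ℝ) * (M * (c1/t)) := by
          have h9 : (0:ℝ) ≤ M * (c1/t) := by positivity
          nlinarith
      _ = M*(ν:ℝ)*(c1/t) := by ring
  have hfirst : ∀ j, j ≠ j₀ → ‖v j - A j j₀ * v j₀ / ((lam - t*q j : ℝ):ℂ)‖
      ≤ (M*(ν:ℝ)*(c1/t)) / (t*g/2) := by
    intro j hj
    have hne := hdne j hj
    have h5 : ((lam - t*q j :ℝ):ℂ) * v j
        = A j j₀ * v j₀ + ∑ k ∈ Finset.univ.erase j₀, A j k * v k := by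
      rw [hrow j, ← Finset.add_sum_erase _ (fun k => A j k * v k) (Finset.mem_univ j₀)]
    have key : v j - A j j₀ * v j₀ / ((lam - t*q j:ℝ):ℂ)
        = (∑ k ∈ Finset.univ.erase j₀, A j k * v k) / ((lam - t*q j :ℝ):ℂ) := by
      rw [eq_div_iff hne, sub_mul, div_mul_cancel₀ _ hne]
      linear_combination h5
    rw [key, norm_div, Complex.norm_real, Real.norm_eq_abs]
    have hden := hsep j hj
    exact div_le_div₀ (by positivity) (hnum j) (by nlinarith) (by linarith)
  have hres : ∀ j, j ≠ j₀ → ‖1/((lam - t*q j:ℝ):ℂ) + 1/((t*(q j - q j₀):ℝ):ℂ)‖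
      ≤ (M*(ν:ℝ)^2) / ((t*g/2) * (t*g)) := by
    intro j hj
    have d1 := hdne j hj
    have d2 : ((t*(q j - q j₀) : ℝ):ℂ) ≠ 0 := by
      rw [Complex.ofReal_ne_zero]
      exact mul_ne_zero (ne_of_gt ht0) (hqne j hj)
    have e1 : (1:ℂ)/((lam - t*q j:ℝ):ℂ) + 1/((t*(q j - q j₀):ℝ):ℂ)
        = ((lam - t*q j₀ : ℝ):ℂ) / (((lam - t*q j:ℝ):ℂ) * ((t*(q j - q j₀):ℝ):ℂ)) := by
      rw [div_add_div _ _ d1 d2]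
      congr 1
      push_cast
      ring
    rw [e1, norm_div, norm_mul, Complex.norm_real, Real.norm_eq_abs, Complex.norm_real, Real.norm_eq_abs,
      Complex.norm_real, Real.norm_eq_abs]
    refine div_le_div₀ (by positivity) hloc ?_ ?_
    · positivity
    · have h1 : t*g ≤ |t*(q j - q j₀)| := by
        rw [abs_mul, abs_of_pos ht0]
        exact mul_le_mul_of_nonneg_left (hgap j j₀ hj) ht0.le
      have h2 := hsep j hj
      have h3 : (0:ℝ) ≤ t*g := by positivity
      nlinarith [abs_nonneg (lam - t*q j), abs_nonneg (t*(q j - q j₀))]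
  set K : ℝ := 2*M^2*(ν:ℝ)*c1/g + 2*M^2*(M*(ν:ℝ)^2)/g^2 with hK
  have hterm : ∀ j ∈ Finset.univ.erase j₀,
      ‖A j₀ j * v j + ((‖A j j₀‖^2 / (t*(q j - q j₀)) : ℝ):ℂ) * v j₀‖
        ≤ K/t^2 := by
    intro j hjmem
    have hj : j ≠ j₀ := Finset.ne_of_mem_erase hjmem
    have d1 := hdne j hj
    have d2 : ((t*(q j - q j₀) : ℝ):ℂ) ≠ 0 := by
      rw [Complex.ofReal_ne_zero]
      exact mul_ne_zero (ne_of_gt ht0) (hqne j hj)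
    have hconj : A j₀ j = (starRingEnd ℂ) (A j j₀) := (hA.apply j₀ j).symm
    have habs2 : ((‖A j j₀‖^2 : ℝ) : ℂ) = A j₀ j * A j j₀ := by
      rw [hconj, Complex.sq_norm, mul_comm, Complex.mul_conj]
    have hid : A j₀ j * v j + ((‖A j j₀‖^2 / (t*(q j - q j₀)) : ℝ):ℂ) * v j₀
        = A j₀ j * (v j - A j j₀ * v j₀ / ((lam - t*q j:ℝ):ℂ))
          + (A j₀ j * A j j₀ * v j₀)
            * (1/((lam - t*q j:ℝ):ℂ) + 1/((t*(q j - q j₀):ℝ):ℂ)) := by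
      have hc : ((‖A j j₀‖^2 / (t*(q j - q j₀)) : ℝ):ℂ)
          = (A j₀ j * A j j₀) / ((t*(q j - q j₀):ℝ):ℂ) := by
        rw [← habs2]
        push_cast
        ring
      rw [hc]
      field_simp
      ring
    rw [hid]
    calc ‖A j₀ j * (v j - A j j₀ * v j₀ / ((lam - t*q j:ℝ):ℂ))
          + (A j₀ j * A j j₀ * v j₀)
            * (1/((lam - t*q j:ℝ):ℂ) + 1/((t*(q j - q j₀):ℝ):ℂ))‖
        ≤ ‖A j₀ j * (v j - A j j₀ * v j₀ / ((lam - t*q j:ℝ):ℂ))‖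
          + ‖(A j₀ j * A j j₀ * v j₀)
            * (1/((lam - t*q j:ℝ):ℂ) + 1/((t*(q j - q j₀):ℝ):ℂ))‖ := norm_add_le _ _
      _ ≤ M * ((M*(ν:ℝ)*(c1/t)) / (t*g/2))
          + (M*M*1) * ((M*(ν:ℝ)^2) / ((t*g/2) * (t*g))) := by
          have b1 : ‖A j₀ j * (v j - A j j₀ * v j₀ / ((lam - t*q j:ℝ):ℂ))‖
              ≤ M * ((M*(ν:ℝ)*(c1/t)) / (t*g/2)) := by
            rw [norm_mul]
            exact mul_le_mul (hb j₀ j) (hfirst j hj) (norm_nonneg _) hM.le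
          have b2 : ‖(A j₀ j * A j j₀ * v j₀)
              * (1/((lam - t*q j:ℝ):ℂ) + 1/((t*(q j - q j₀):ℝ):ℂ))‖
              ≤ (M*M*1) * ((M*(ν:ℝ)^2) / ((t*g/2) * (t*g))) := by
            rw [norm_mul]
            refine mul_le_mul ?_ (hres j hj) (norm_nonneg _) (by positivity)
            rw [norm_mul, norm_mul]
            have n2 := norm_nonneg (A j j₀)
            have n3 := ha0 j₀
            have b3 : ‖A j₀ j‖ * ‖A j j₀‖ ≤ M * M :=
              mul_le_mul (hb j₀ j) (hb j j₀) n2 hM.le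
            exact mul_le_mul b3 (ha1 j₀) n3 (by positivity)
          linarith
      _ = K/t^2 := by
          rw [hK, hc1]
          field_simp
  set S : ℝ := ∑ j ∈ Finset.univ.erase j₀, ‖A j j₀‖^2 / (q j - q j₀) with hS
  have hAre : (((A j₀ j₀).re : ℝ) : ℂ) = A j₀ j₀ :=
    Complex.conj_eq_iff_re.mp (hA.apply j₀ j₀)
  have h5 : ((lam - t*q j₀ :ℝ):ℂ) * v j₀
      = A j₀ j₀ * v j₀ + ∑ k ∈ Finset.univ.erase j₀, A j₀ k * v k := by
    rw [hrow j₀, ← Finset.add_sum_erase _ (fun k => A j₀ k * v k) (Finset.mem_univ j₀)]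
  have hmain : ((lam - (t * q j₀ + (A j₀ j₀).re - (1/t) * S) : ℝ):ℂ) * v j₀
      = ∑ j ∈ Finset.univ.erase j₀,
          (A j₀ j * v j + ((‖A j j₀‖^2 / (t*(q j - q j₀)) : ℝ):ℂ) * v j₀) := by
    have hcast : ((lam - (t * q j₀ + (A j₀ j₀).re - (1/t) * S) : ℝ):ℂ)
        = (((lam - t*q j₀ : ℝ):ℂ) - A j₀ j₀) + (((1/t) * S : ℝ):ℂ) := by
      rw [← hAre]; push_cast; simp only [Complex.ofReal_re]; ring
    rw [hcast, add_mul, sub_mul, h5]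
    rw [Finset.sum_add_distrib]
    congr 1
    · ring
    · rw [← Finset.sum_mul]
      congr 1
      rw [hS]
      push_cast
      rw [Finset.mul_sum]
      refine Finset.sum_congr rfl (fun j hj => ?_)
      have hq1 : ((q j :ℂ) - (q j₀ :ℂ)) ≠ 0 := by
        have := hqne j (Finset.ne_of_mem_erase hj)
        intro hcon
        apply this
        have : ((q j - q j₀ : ℝ) : ℂ) = 0 := by push_cast; linear_combination hcon
        exact_mod_cast this
      have ht' : (t:ℂ) ≠ 0 := by exact_mod_cast ne_of_gt ht0
      field_simp
  have habs : |lam - (t * q j₀ + (A j₀ j₀).re - (1/t) * S)| * a j₀ ≤ (ν:ℝ) * (K/t^2) := by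
    have h6 : ‖((lam - (t * q j₀ + (A j₀ j₀).re - (1/t) * S) : ℝ):ℂ) * v j₀‖
        ≤ (ν:ℝ) * (K/t^2) := by
      rw [hmain]
      calc ‖∑ j ∈ Finset.univ.erase j₀,
            (A j₀ j * v j + ((‖A j j₀‖^2 / (t*(q j - q j₀)) : ℝ):ℂ) * v j₀)‖
          ≤ ∑ j ∈ Finset.univ.erase j₀, ‖A j₀ j * v j + ((‖A j j₀‖^2 / (t*(q j - q j₀)) : ℝ):ℂ) * v j₀‖ :=
            norm_sum_le _ _
        _ ≤ ∑ _j ∈ Finset.univ.erase j₀, K/t^2 := Finset.sum_le_sum hterm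
        _ = ((Finset.univ.erase j₀).card : ℝ) * (K/t^2) := by
            rw [Finset.sum_const, nsmul_eq_mul]
        _ ≤ (ν:ℝ) * (K/t^2) := by
            have h9 : (0:ℝ) ≤ K/t^2 := by positivity
            nlinarith
    rwa [norm_mul, Complex.norm_real, Real.norm_eq_abs] at h6
  rw [show (2*(ν:ℝ)*K)/t^2 = 2*((ν:ℝ)*(K/t^2)) by ring]
  nlinarith [abs_nonneg (lam - (t*q j₀ + (A j₀ j₀).re - (1/t)*S))]


set_option maxHeartbeats 1600000 in
/-- large-coupling asymptotics of the eigenvalues of `t·q + A`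
(`q` a real diagonal matrix with strictly increasing entries, `A` Hermitian
with entries bounded by `M`). -/
theorem large_coupling_eigenvalue_asymptotics (ν : ℕ) (hν : 1 ≤ ν)
    (q : Fin ν → ℝ) (hq : StrictMono q) (M : ℝ) (hM : 0 < M) :
    ∃ C > (0 : ℝ), ∃ t₀ > (0 : ℝ),
      ∀ (A : Matrix (Fin ν) (Fin ν) ℂ), A.IsHermitian →
        (∀ j k, ‖A j k‖ ≤ M) →
        ∀ t : ℝ, t₀ ≤ t → ∀ n : Fin ν,
          ∀ h : (t • Matrix.diagonal (fun j => (q j : ℂ)) + A).IsHermitian,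
            |eigs h n -
              (t * q n + (A n n).re -
                (1 / t) * ∑ j ∈ Finset.univ.erase n,
                  ‖A j n‖ ^ 2 / (q j - q n))| ≤ C / t ^ 2 := by
  obtain ⟨g, hg, hgap⟩ := LCA_gap q hq
  have hν' : (1:ℝ) ≤ (ν:ℝ) := by exact_mod_cast hν
  have hνpos : (0:ℝ) < (ν:ℝ) := by linarith
  refine ⟨2*(ν:ℝ)*(2*M^2*(ν:ℝ)*(2*M*(ν:ℝ)/g)/g + 2*M^2*(M*(ν:ℝ)^2)/g^2) + 1, by positivity,
    (2*(M*(ν:ℝ)^2) + 2)/g + 2*(ν:ℝ)*(2*M*(ν:ℝ)/g) + 1, by positivity, ?_⟩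
  intro A hA hb t ht n h
  have ht1 : 1 ≤ t := by
    have h1 : (0:ℝ) ≤ (2*(M*(ν:ℝ)^2) + 2)/g := by positivity
    have h2 : (0:ℝ) ≤ 2*(ν:ℝ)*(2*M*(ν:ℝ)/g) := by positivity
    linarith
  have ht0 : (0:ℝ) < t := by linarith
  have htg : 2*(M*(ν:ℝ)^2) + 2 ≤ t*g := by
    have h2 : (0:ℝ) ≤ 2*(ν:ℝ)*(2*M*(ν:ℝ)/g) := by positivity
    have h1 : (2*(M*(ν:ℝ)^2) + 2)/g ≤ t := by linarith
    calc 2*(M*(ν:ℝ)^2) + 2 = ((2*(M*(ν:ℝ)^2) + 2)/g) * g := by field_simp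
    _ ≤ t * g := mul_le_mul_of_nonneg_right h1 hg.le
  have htc : 2*(ν:ℝ)*(2*M*(ν:ℝ)/g) ≤ t := by
    have h1 : (0:ℝ) ≤ (2*(M*(ν:ℝ)^2) + 2)/g := by positivity
    linarith
  have hquarter : (ν:ℝ) * ((2*M*(ν:ℝ)/g)/t)^2 ≤ 1/4 := by
    rw [div_pow, ← mul_div_assoc, div_le_iff₀ (by positivity : (0:ℝ) < t^2)]
    nlinarith [mul_self_le_mul_self (by positivity : (0:ℝ) ≤ 2*(ν:ℝ)*(2*M*(ν:ℝ)/g)) htc,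
      mul_nonneg (mul_nonneg (sub_nonneg.mpr hν') (by positivity : (0:ℝ) ≤ (ν:ℝ)))
        (sq_nonneg (2*M*(ν:ℝ)/g))]
  have hcard : ∀ j₀ : Fin ν, (((Finset.univ : Finset (Fin ν)).erase j₀).card : ℝ) ≤ (ν:ℝ) := by
    intro j₀
    have h1 : ((Finset.univ : Finset (Fin ν)).erase j₀).card ≤ ν := by
      calc _ ≤ (Finset.univ : Finset (Fin ν)).card := Finset.card_erase_le
      _ = ν := by simp
    exact_mod_cast h1
  have hloc : ∀ i, ∃ j, |h.eigenvalues i - t*q j| ≤ M*(ν:ℝ)^2 :=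
    fun i => LCA_loc hν q M t hM A hb h i
  choose win hwin using hloc
  have hwinj : Function.Injective win := by
    intro i i' hii
    by_contra hne
    obtain ⟨hoff1, hj1, -⟩ :=
      LCA_window hν q hq M g t hM hg hgap A hA hb ht1 htg htc h i (win i) (hwin i)
    obtain ⟨hoff2, hj2, -⟩ :=
      LCA_window hν q hq M g t hM hg hgap A hA hb ht1 htg htc h i' (win i') (hwin i')
    rw [hii] at hoff1 hj1
    set j₀ := win i' with hj₀def
    have horth := LCA_orth h hne
    have hsplit : (starRingEnd ℂ) ((h.eigenvectorBasis i) j₀) * (h.eigenvectorBasis i') j₀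
        = - ∑ j ∈ Finset.univ.erase j₀,
            (starRingEnd ℂ) ((h.eigenvectorBasis i) j) * (h.eigenvectorBasis i') j := by
      have h7 := Finset.add_sum_erase Finset.univ
        (fun j => (starRingEnd ℂ) ((h.eigenvectorBasis i) j) * (h.eigenvectorBasis i') j)
        (Finset.mem_univ j₀)
      rw [horth] at h7
      linear_combination h7
    have hRHS : ‖∑ j ∈ Finset.univ.erase j₀,
          (starRingEnd ℂ) ((h.eigenvectorBasis i) j) * (h.eigenvectorBasis i') j‖
        ≤ (ν:ℝ) * ((2*M*(ν:ℝ)/g)/t)^2 := by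
      calc ‖∑ j ∈ Finset.univ.erase j₀,
            (starRingEnd ℂ) ((h.eigenvectorBasis i) j) * (h.eigenvectorBasis i') j‖
          ≤ ∑ j ∈ Finset.univ.erase j₀, ‖(starRingEnd ℂ) ((h.eigenvectorBasis i) j) * (h.eigenvectorBasis i') j‖ :=
            norm_sum_le _ _
        _ ≤ ∑ _j ∈ Finset.univ.erase j₀, ((2*M*(ν:ℝ)/g)/t)^2 := by
            refine Finset.sum_le_sum (fun j hj => ?_)
            rw [norm_mul, Complex.norm_conj, sq]
            exact mul_le_mul (hoff1 j (Finset.ne_of_mem_erase hj))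
              (hoff2 j (Finset.ne_of_mem_erase hj)) (norm_nonneg _) (by positivity)
        _ = ((Finset.univ.erase j₀).card : ℝ) * ((2*M*(ν:ℝ)/g)/t)^2 := by
            rw [Finset.sum_const, nsmul_eq_mul]
        _ ≤ (ν:ℝ) * ((2*M*(ν:ℝ)/g)/t)^2 := by
            have h9 : (0:ℝ) ≤ ((2*M*(ν:ℝ)/g)/t)^2 := sq_nonneg _
            nlinarith [hcard j₀]
    have hLHS : ‖(starRingEnd ℂ) ((h.eigenvectorBasis i) j₀)
          * (h.eigenvectorBasis i') j₀‖
        = ‖(h.eigenvectorBasis i) j₀‖ * ‖(h.eigenvectorBasis i') j₀‖ := by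
      rw [norm_mul, Complex.norm_conj]
    have hprod : ‖(h.eigenvectorBasis i) j₀‖ * ‖(h.eigenvectorBasis i') j₀‖
        ≤ 1/4 := by
      rw [← hLHS, hsplit, norm_neg]
      linarith [hRHS, hquarter]
    have n1 := norm_nonneg ((h.eigenvectorBasis i) j₀)
    have n2 := norm_nonneg ((h.eigenvectorBasis i') j₀)
    nlinarith [mul_le_mul hj1 hj2 (by norm_num) (sq_nonneg (‖(h.eigenvectorBasis i) j₀‖)),
      mul_self_le_mul_self (mul_nonneg n1 n2) hprod]
  set σ := Tuple.sort h.eigenvalues with hσ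
  have hmono : Monotone (h.eigenvalues ∘ ⇑σ) := Tuple.monotone_sort h.eigenvalues
  have hπmono : StrictMono (fun k => win (σ k)) := by
    intro k l hkl
    show win (σ k) < win (σ l)
    rcases lt_trichotomy (win (σ k)) (win (σ l)) with h'|h'|h'
    · exact h'
    · exact absurd (σ.injective (hwinj h')) (Fin.ne_of_lt hkl)
    · exfalso
      have e1 := abs_le.mp (hwin (σ k))
      have e2 := abs_le.mp (hwin (σ l))
      have hql : q (win (σ l)) < q (win (σ k)) := hq h'
      have hge : g ≤ q (win (σ k)) - q (win (σ l)) := by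
        have h8 := hgap _ _ (ne_of_gt h')
        rwa [abs_of_pos (sub_pos.mpr hql)] at h8
      have hle : h.eigenvalues (σ k) ≤ h.eigenvalues (σ l) := hmono hkl.le
      have hmul : t * g ≤ t * (q (win (σ k)) - q (win (σ l))) :=
        mul_le_mul_of_nonneg_left hge ht0.le
      rw [mul_sub] at hmul
      linarith [e1.1, e2.2]
  have hπid : ∀ k, win (σ k) = k := LCA_id _ hπmono
  obtain ⟨-, -, hfin⟩ :=
    LCA_window hν q hq M g t hM hg hgap A hA hb ht1 htg htc h (σ n) n (by
      have h9 := hwin (σ n)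
      rwa [show win (σ n) = n from hπid n] at h9)
  have heigs : eigs h n = h.eigenvalues (σ n) := rfl
  rw [heigs]
  refine le_trans hfin ?_
  have ht2 : (0:ℝ) < t^2 := by positivity
  rw [div_le_div_iff₀ ht2 ht2]
  nlinarith [ht2]
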